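/- arXiv:2311.05788 — 3 statements merged into one kernel-verified Lean document; each statement's English description precedes it below -/
import Mathlib

section
/- For discrete measures α = Σᵢ aᵢ δ_{xᵢ} on ℝ^{d_x} and β = Σⱼ bⱼ δ_{yⱼ} on ℝ^{d_y}, the minimization over couplings π of the Gromov–Wasserstein inner-product objective ∬ (⟨x,x'⟩ − ⟨y,y'⟩)² dπ dπ has the same minimizers in π as the joint minimization over (π, M ∈ ℝ^{d_y×d_x}) of −∬ ⟨Mx, y⟩ dπ + ½‖M‖_F². -/
open Matrix BigOperators

/-- `π` is a coupling matrix with marginals `a` and `b`. -/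
def IsCoupling {m n : ℕ} (a : Fin m → ℝ) (b : Fin n → ℝ)
    (π : Matrix (Fin m) (Fin n) ℝ) : Prop :=
  (∀ i j, 0 ≤ π i j) ∧ (∀ i, ∑ j, π i j = a i) ∧ (∀ j, ∑ i, π i j = b j)

/-- The Gromov–Wasserstein inner-product objective. -/
def GWIP {m n dx dy : ℕ} (x : Fin m → Fin dx → ℝ) (y : Fin n → Fin dy → ℝ)
    (π : Matrix (Fin m) (Fin n) ℝ) : ℝ :=
  ∑ i, ∑ j, ∑ k, ∑ l, ((x i ⬝ᵥ x k) - (y j ⬝ᵥ y l))^2 * π i j * π k l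

/-- The cost-regularized joint objective. -/
noncomputable def JIP {m n dx dy : ℕ} (x : Fin m → Fin dx → ℝ) (y : Fin n → Fin dy → ℝ)
    (π : Matrix (Fin m) (Fin n) ℝ) (M : Matrix (Fin dy) (Fin dx) ℝ) : ℝ :=
  -(∑ i, ∑ j, π i j * (M.mulVec (x i) ⬝ᵥ y j)) + (1/2) * ∑ p, ∑ q, (M p q)^2

/- ===== Auxiliary material ===== -/

lemma swap4 {α β γ δ : Type*} [Fintype α] [Fintype β] [Fintype γ] [Fintype δ]
    (f : α → β → γ → δ → ℝ) :
    ∑ i, ∑ j, ∑ p, ∑ q, f i j p q = ∑ p, ∑ q, ∑ i, ∑ j, f i j p q := by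
  trans ∑ i, ∑ p, ∑ j, ∑ q, f i j p q
  · exact Finset.sum_congr rfl fun i _ => Finset.sum_comm
  rw [Finset.sum_comm]
  refine Finset.sum_congr rfl fun p _ => ?_
  trans ∑ i, ∑ q, ∑ j, f i j p q
  · exact Finset.sum_congr rfl fun i _ => Finset.sum_comm
  exact Finset.sum_comm

/-- The matrix `E(π) = Σ_{ij} π_{ij} y_j x_i^T`. -/
noncomputable def Emat {m n dx dy : ℕ} (x : Fin m → Fin dx → ℝ) (y : Fin n → Fin dy → ℝ)
    (π : Matrix (Fin m) (Fin n) ℝ) : Matrix (Fin dy) (Fin dx) ℝ :=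
  fun p q => ∑ i, ∑ j, π i j * y j p * x i q

lemma lem_inner {m n dx dy : ℕ} (x : Fin m → Fin dx → ℝ) (y : Fin n → Fin dy → ℝ)
    (π : Matrix (Fin m) (Fin n) ℝ) (M : Matrix (Fin dy) (Fin dx) ℝ) :
    ∑ i, ∑ j, π i j * (M.mulVec (x i) ⬝ᵥ y j) = ∑ p, ∑ q, M p q * Emat x y π p q := by
  have h1 : ∑ i, ∑ j, π i j * (M.mulVec (x i) ⬝ᵥ y j)
      = ∑ i, ∑ j, ∑ p, ∑ q, M p q * (π i j * y j p * x i q) := by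
    refine Finset.sum_congr rfl fun i _ => Finset.sum_congr rfl fun j _ => ?_
    simp only [Matrix.mulVec, dotProduct, Finset.mul_sum, Finset.sum_mul]
    refine Finset.sum_congr rfl fun p _ => Finset.sum_congr rfl fun q _ => ?_
    ring
  rw [h1, swap4]
  refine Finset.sum_congr rfl fun p _ => Finset.sum_congr rfl fun q _ => ?_
  simp only [Emat, Finset.mul_sum]

lemma lem_jip {m n dx dy : ℕ} (x : Fin m → Fin dx → ℝ) (y : Fin n → Fin dy → ℝ)
    (π : Matrix (Fin m) (Fin n) ℝ) (M : Matrix (Fin dy) (Fin dx) ℝ) :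
    JIP x y π M = (1/2) * (∑ p, ∑ q, (M p q - Emat x y π p q)^2)
      - (1/2) * (∑ p, ∑ q, (Emat x y π p q)^2) := by
  unfold JIP
  rw [lem_inner]
  have h : ∑ p, ∑ q, (M p q - Emat x y π p q)^2
      = (∑ p, ∑ q, (M p q)^2) - 2 * (∑ p, ∑ q, M p q * Emat x y π p q)
        + (∑ p, ∑ q, (Emat x y π p q)^2) := by
    simp_rw [sub_sq, Finset.sum_add_distrib, Finset.sum_sub_distrib, Finset.mul_sum]
    ring_nf
  rw [h]; ring

lemma term_x {m n : ℕ} (a : Fin m → ℝ) (π : Matrix (Fin m) (Fin n) ℝ)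
    (ha : ∀ i, ∑ j, π i j = a i) (g : Fin m → Fin m → ℝ) :
    ∑ i, ∑ j, ∑ k, ∑ l, g i k * π i j * π k l = ∑ i, ∑ k, g i k * a i * a k := by
  refine Finset.sum_congr rfl fun i _ => ?_
  have h1 : ∀ j k, ∑ l, g i k * π i j * π k l = g i k * π i j * a k := fun j k => by
    rw [← Finset.mul_sum, ha k]
  simp_rw [h1]
  rw [Finset.sum_comm]
  refine Finset.sum_congr rfl fun k _ => ?_
  have h2 : ∀ j, g i k * π i j * a k = (g i k * a k) * π i j := fun j => by ring
  simp_rw [h2, ← Finset.mul_sum, ha i]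
  ring

lemma term_y {m n : ℕ} (b : Fin n → ℝ) (π : Matrix (Fin m) (Fin n) ℝ)
    (hb : ∀ j, ∑ i, π i j = b j) (g : Fin n → Fin n → ℝ) :
    ∑ i, ∑ j, ∑ k, ∑ l, g j l * π i j * π k l = ∑ j, ∑ l, g j l * b j * b l := by
  rw [Finset.sum_comm]
  refine Finset.sum_congr rfl fun j _ => ?_
  have h1 : ∀ i l, ∑ k, g j l * π i j * π k l = g j l * π i j * b l := by
    intro i l
    rw [← Finset.mul_sum, hb l]
  have h2 : ∀ i, ∑ k, ∑ l, g j l * π i j * π k l = ∑ l, g j l * π i j * b l := by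
    intro i; rw [Finset.sum_comm]; exact Finset.sum_congr rfl fun l _ => h1 i l
  simp_rw [h2]
  rw [Finset.sum_comm]
  refine Finset.sum_congr rfl fun l _ => ?_
  have h3 : ∀ i, g j l * π i j * b l = (g j l * b l) * π i j := fun i => by ring
  simp_rw [h3, ← Finset.mul_sum, hb j]
  ring

lemma term_cross {m n dx dy : ℕ} (x : Fin m → Fin dx → ℝ) (y : Fin n → Fin dy → ℝ)
    (π : Matrix (Fin m) (Fin n) ℝ) :
    ∑ i, ∑ j, ∑ k, ∑ l, (x i ⬝ᵥ x k) * (y j ⬝ᵥ y l) * π i j * π k l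
      = ∑ p, ∑ q, (Emat x y π p q)^2 := by
  have hE : ∀ p q, (Emat x y π p q)^2
      = ∑ i, ∑ k, ∑ j, ∑ l, (π i j * y j p * x i q) * (π k l * y l p * x k q) := by
    intro p q
    rw [sq, Emat, Finset.sum_mul_sum]
    exact Finset.sum_congr rfl fun i _ => Finset.sum_congr rfl fun k _ => Finset.sum_mul_sum _ _ _ _
  simp_rw [hE]
  rw [swap4 (f := fun p q i k => ∑ j, ∑ l, (π i j * y j p * x i q) * (π k l * y l p * x k q))]
  have h2 : ∀ i k, ∑ p, ∑ q, ∑ j, ∑ l, (π i j * y j p * x i q) * (π k l * y l p * x k q)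
      = ∑ j, ∑ l, ∑ p, ∑ q, (π i j * y j p * x i q) * (π k l * y l p * x k q) :=
    fun i k => swap4 _
  simp_rw [h2]
  refine Finset.sum_congr rfl fun i _ => ?_
  trans ∑ k, ∑ j, ∑ l, (x i ⬝ᵥ x k) * (y j ⬝ᵥ y l) * π i j * π k l
  · exact Finset.sum_comm
  refine Finset.sum_congr rfl fun k _ => Finset.sum_congr rfl fun j _ =>
    Finset.sum_congr rfl fun l _ => ?_
  symm
  have hq : ∀ p, ∑ q, (π i j * y j p * x i q) * (π k l * y l p * x k q)
      = (π i j * π k l * (x i ⬝ᵥ x k)) * (y j p * y l p) := by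
    intro p
    simp only [dotProduct, Finset.mul_sum, Finset.sum_mul]
    exact Finset.sum_congr rfl fun q _ => by ring
  simp_rw [hq]
  rw [← Finset.mul_sum]
  simp only [dotProduct]
  ring

lemma gwip_eq {m n dx dy : ℕ} (a : Fin m → ℝ) (b : Fin n → ℝ)
    (x : Fin m → Fin dx → ℝ) (y : Fin n → Fin dy → ℝ)
    (π : Matrix (Fin m) (Fin n) ℝ) (hc : IsCoupling a b π) :
    GWIP x y π = ((∑ i, ∑ k, ((x i ⬝ᵥ x k)^2) * a i * a k)
        + (∑ j, ∑ l, ((y j ⬝ᵥ y l)^2) * b j * b l))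
      - 2 * (∑ p, ∑ q, (Emat x y π p q)^2) := by
  obtain ⟨-, ha, hb⟩ := hc
  have hbody : ∀ i j k l, ((x i ⬝ᵥ x k) - (y j ⬝ᵥ y l))^2 * π i j * π k l
      = ((x i ⬝ᵥ x k)^2) * π i j * π k l + ((y j ⬝ᵥ y l)^2) * π i j * π k l
        - 2 * ((x i ⬝ᵥ x k) * (y j ⬝ᵥ y l) * π i j * π k l) := by
    intros; ring
  have expand : GWIP x y π
      = (∑ i, ∑ j, ∑ k, ∑ l, ((x i ⬝ᵥ x k)^2) * π i j * π k l)
        + (∑ i, ∑ j, ∑ k, ∑ l, ((y j ⬝ᵥ y l)^2) * π i j * π k l)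
        - 2 * (∑ i, ∑ j, ∑ k, ∑ l, (x i ⬝ᵥ x k) * (y j ⬝ᵥ y l) * π i j * π k l) := by
    unfold GWIP
    simp_rw [hbody]
    simp_rw [Finset.sum_sub_distrib]
    simp_rw [Finset.sum_add_distrib]
    simp_rw [← Finset.mul_sum]
  rw [expand, term_x a π ha (fun i k => (x i ⬝ᵥ x k)^2), term_y b π hb (fun j l => (y j ⬝ᵥ y l)^2),
    term_cross x y π]

lemma sqsum_nonneg {dx dy : ℕ} (A : Matrix (Fin dy) (Fin dx) ℝ) :
    0 ≤ ∑ p, ∑ q, (A p q)^2 :=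
  Finset.sum_nonneg fun p _ => Finset.sum_nonneg fun q _ => sq_nonneg _

/-- the GW inner-product problem and the joint cost-regularized
problem have the same minimizers in `π`. -/
theorem gwip_eq_rot_minimizers {m n dx dy : ℕ}
    (a : Fin m → ℝ) (b : Fin n → ℝ)
    (x : Fin m → Fin dx → ℝ) (y : Fin n → Fin dy → ℝ)
    (πstar : Matrix (Fin m) (Fin n) ℝ) (hπ : IsCoupling a b πstar) :
    (∀ π', IsCoupling a b π' → GWIP x y πstar ≤ GWIP x y π') ↔
    (∃ M : Matrix (Fin dy) (Fin dx) ℝ,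
      ∀ π' (M' : Matrix (Fin dy) (Fin dx) ℝ), IsCoupling a b π' →
        JIP x y πstar M ≤ JIP x y π' M') := by
  constructor
  · intro h
    refine ⟨Emat x y πstar, fun π' M' h' => ?_⟩
    have e1 : JIP x y πstar (Emat x y πstar)
        = - (1/2) * (∑ p, ∑ q, (Emat x y πstar p q)^2) := by
      rw [lem_jip]; simp
    have e2 := lem_jip x y π' M'
    have hg := h π' h'
    rw [gwip_eq a b x y πstar hπ, gwip_eq a b x y π' h'] at hg
    have n1 := sqsum_nonneg (fun p q => M' p q - Emat x y π' p q)
    rw [e1, e2]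
    linarith
  · rintro ⟨M, hM⟩ π' h'
    have h1 := hM π' (Emat x y π') h'
    have e1 : JIP x y π' (Emat x y π')
        = - (1/2) * (∑ p, ∑ q, (Emat x y π' p q)^2) := by
      rw [lem_jip]; simp
    have e2 := lem_jip x y πstar M
    have n1 := sqsum_nonneg (fun p q => M p q - Emat x y πstar p q)
    rw [e1, e2] at h1
    rw [gwip_eq a b x y πstar hπ, gwip_eq a b x y π' h']
    linarith
end

section
/- The proximal operator of λ times the ℓ_{1,2} group norm (sum of column Euclidean norms) acts column-wise by block soft-thresholding: the i-th column of prox_{λ‖·‖_{1,2}}(M) equals (1 − λ/max(‖M_{:i}‖₂, λ)) M_{:i}, i.e., it is 0 if ‖M_{:i}‖₂ ≤ λ and (1 − λ/‖M_{:i}‖₂) M_{:i} otherwise. -/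
open BigOperators

/-- Squared Frobenius norm. -/
def frobSq {m n : ℕ} (A : Matrix (Fin m) (Fin n) ℝ) : ℝ :=
  ∑ i, ∑ j, (A i j)^2

/-- Euclidean norm of the `i`-th column of `A`. -/
noncomputable def colNorm {m n : ℕ} (A : Matrix (Fin m) (Fin n) ℝ) (i : Fin n) : ℝ :=
  Real.sqrt (∑ r, (A r i)^2)

/-- The ℓ_{1,2} group norm: sum of Euclidean norms of the columns. -/
noncomputable def l12Norm {m n : ℕ} (A : Matrix (Fin m) (Fin n) ℝ) : ℝ :=
  ∑ i, colNorm A i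

/-!
The objective `½‖M − Z‖_F² + λ‖Z‖_{1,2}` splits into independent column problems
`f(z) = ½‖v − z‖² + λ‖z‖`. A point `s` minimises `f` as soon as `v − s` is `λ` times a
subgradient of the norm at `s`, i.e. `‖v − s‖ ≤ λ` and `⟪v − s, s⟫ = λ‖s‖`: expanding the square
around `s` and applying Cauchy–Schwarz gives even `f(s) + ½‖z − s‖² ≤ f(z)`, which yields
uniqueness. Block soft-thresholding satisfies both conditions.
-/

open scoped RealInnerProductSpace

section BlockSoftThreshold

variable {E : Type*} [SeminormedAddCommGroup E] [InnerProductSpace ℝ E]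

noncomputable def proxNormObjective (lam : ℝ) (v z : E) : ℝ :=
  1 / 2 * ‖v - z‖ ^ 2 + lam * ‖z‖

theorem proxNormObjective_add_half_norm_sub_sq_le {lam : ℝ} {v s : E}
    (hnorm : ‖v - s‖ ≤ lam) (hinner : ⟪v - s, s⟫ = lam * ‖s‖) (z : E) :
    proxNormObjective lam v s + 1 / 2 * ‖z - s‖ ^ 2 ≤ proxNormObjective lam v z := by
  have hexpand : ‖v - z‖ ^ 2 = ‖v - s‖ ^ 2 - 2 * ⟪v - s, z - s⟫ + ‖z - s‖ ^ 2 := by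
    rw [← norm_sub_sq_real, sub_sub_sub_cancel_right]
  have hcs : ⟪v - s, z⟫ ≤ lam * ‖z‖ :=
    (real_inner_le_norm _ _).trans (mul_le_mul_of_nonneg_right hnorm (norm_nonneg z))
  unfold proxNormObjective
  rw [hexpand, inner_sub_right]
  linarith

noncomputable def blockSoftThreshold (lam : ℝ) (v : E) : E :=
  (1 - lam / max ‖v‖ lam) • v

theorem sub_blockSoftThreshold (lam : ℝ) (v : E) :
    v - blockSoftThreshold lam v = (lam / max ‖v‖ lam) • v := by
  rw [blockSoftThreshold, sub_smul, one_smul, sub_sub_cancel]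

theorem norm_sub_blockSoftThreshold_le {lam : ℝ} (hlam : 0 < lam) (v : E) :
    ‖v - blockSoftThreshold lam v‖ ≤ lam := by
  have hmax : 0 < max ‖v‖ lam := lt_max_of_lt_right hlam
  rw [sub_blockSoftThreshold, norm_smul, Real.norm_of_nonneg (by positivity), div_mul_comm]
  exact mul_le_of_le_one_left hlam.le ((div_le_one hmax).mpr (le_max_left _ _))

theorem inner_sub_blockSoftThreshold {lam : ℝ} (hlam : 0 < lam) (v : E) :
    ⟪v - blockSoftThreshold lam v, blockSoftThreshold lam v⟫
      = lam * ‖blockSoftThreshold lam v‖ := by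
  rcases le_total ‖v‖ lam with hle | hlt
  · have hzero : blockSoftThreshold lam v = 0 := by
      rw [blockSoftThreshold, max_eq_right hle, div_self hlam.ne', sub_self, zero_smul]
    rw [hzero, inner_zero_right, norm_zero, mul_zero]
  · have hv : 0 < ‖v‖ := hlam.trans_le hlt
    have hshrink : 0 ≤ 1 - lam / ‖v‖ := sub_nonneg.mpr ((div_le_one hv).mpr hlt)
    rw [sub_blockSoftThreshold, blockSoftThreshold, max_eq_left hlt, real_inner_smul_left,
      real_inner_smul_right, real_inner_self_eq_norm_sq, norm_smul, Real.norm_of_nonneg hshrink]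
    field_simp

theorem proxNormObjective_blockSoftThreshold_add_le {lam : ℝ} (hlam : 0 < lam) (v z : E) :
    proxNormObjective lam v (blockSoftThreshold lam v)
        + 1 / 2 * ‖z - blockSoftThreshold lam v‖ ^ 2
      ≤ proxNormObjective lam v z :=
  proxNormObjective_add_half_norm_sub_sq_le (norm_sub_blockSoftThreshold_le hlam v)
    (inner_sub_blockSoftThreshold hlam v) z

end BlockSoftThreshold

section Columns

variable {m n : ℕ}

def colVec (A : Matrix (Fin m) (Fin n) ℝ) (i : Fin n) : EuclideanSpace ℝ (Fin m) :=
  WithLp.toLp 2 fun r => A r i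

theorem colVec_sub (A B : Matrix (Fin m) (Fin n) ℝ) (i : Fin n) :
    colVec (A - B) i = colVec A i - colVec B i :=
  WithLp.toLp_sub 2 (fun r => A r i) (fun r => B r i)

theorem colNorm_eq_norm_colVec (A : Matrix (Fin m) (Fin n) ℝ) (i : Fin n) :
    colNorm A i = ‖colVec A i‖ := by
  simp [colNorm, colVec, EuclideanSpace.norm_eq]

theorem frobSq_eq_sum_norm_colVec_sq (A : Matrix (Fin m) (Fin n) ℝ) :
    frobSq A = ∑ i, ‖colVec A i‖ ^ 2 := by
  simp_rw [← colNorm_eq_norm_colVec, colNorm,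
    Real.sq_sqrt (Finset.sum_nonneg fun _ _ => sq_nonneg _)]
  exact Finset.sum_comm

theorem frobSq_nonneg (A : Matrix (Fin m) (Fin n) ℝ) : 0 ≤ frobSq A := by
  rw [frobSq_eq_sum_norm_colVec_sq]
  positivity

theorem frobSq_eq_zero_iff {A : Matrix (Fin m) (Fin n) ℝ} : frobSq A = 0 ↔ A = 0 := by
  refine ⟨fun h => ?_, fun h => by simp [h, frobSq]⟩
  ext r i
  have hrow : ∑ j, A r j ^ 2 = 0 := (Finset.sum_eq_zero_iff_of_nonneg fun r _ =>
    Finset.sum_nonneg fun j _ => sq_nonneg (A r j)).mp h r (Finset.mem_univ r)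
  exact pow_eq_zero_iff two_ne_zero |>.mp <|
    (Finset.sum_eq_zero_iff_of_nonneg fun j _ => sq_nonneg (A r j)).mp hrow i (Finset.mem_univ i)

theorem half_frobSq_sub_add_l12Norm_eq_sum (lam : ℝ) (M Z : Matrix (Fin m) (Fin n) ℝ) :
    1 / 2 * frobSq (M - Z) + lam * l12Norm Z
      = ∑ i, proxNormObjective lam (colVec M i) (colVec Z i) := by
  simp only [frobSq_eq_sum_norm_colVec_sq, l12Norm, colNorm_eq_norm_colVec, colVec_sub,
    proxNormObjective, Finset.mul_sum, Finset.sum_add_distrib]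

end Columns

/-- the proximal operator of `λ‖·‖_{1,2}` is column-wise block
soft-thresholding: the matrix `S` whose `i`-th column equals
`(1 − λ / max (‖M_{:i}‖₂) λ) • M_{:i}` is the unique minimizer of
`Z ↦ ½‖M − Z‖_F² + λ‖Z‖_{1,2}`. -/
theorem prox_l12_block_soft_thresholding {m n : ℕ} (lam : ℝ) (hlam : 0 < lam)
    (M : Matrix (Fin m) (Fin n) ℝ)
    (S : Matrix (Fin m) (Fin n) ℝ)
    (hS : ∀ r i, S r i = (1 - lam / max (colNorm M i) lam) * M r i) :
    (∀ Z, (1/2) * frobSq (M - S) + lam * l12Norm S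
        ≤ (1/2) * frobSq (M - Z) + lam * l12Norm Z) ∧
    (∀ Z, (∀ Z', (1/2) * frobSq (M - Z) + lam * l12Norm Z
        ≤ (1/2) * frobSq (M - Z') + lam * l12Norm Z') → Z = S) ∧
    (∀ r i, colNorm M i ≤ lam → S r i = 0) ∧
    (∀ r i, lam < colNorm M i → S r i = (1 - lam / colNorm M i) * M r i) := by
  have hcol : ∀ i, colVec S i = blockSoftThreshold lam (colVec M i) := fun i => by
    ext r
    simp [colVec, blockSoftThreshold, hS, colNorm_eq_norm_colVec]
  have hgrowth : ∀ Z, 1 / 2 * frobSq (M - S) + lam * l12Norm S + 1 / 2 * frobSq (Z - S)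
      ≤ 1 / 2 * frobSq (M - Z) + lam * l12Norm Z := fun Z => by
    rw [half_frobSq_sub_add_l12Norm_eq_sum, half_frobSq_sub_add_l12Norm_eq_sum,
      frobSq_eq_sum_norm_colVec_sq, Finset.mul_sum, ← Finset.sum_add_distrib]
    simp only [colVec_sub, hcol]
    gcongr with i
    exact proxNormObjective_blockSoftThreshold_add_le hlam _ _
  refine ⟨fun Z => ?_, fun Z hZ => ?_, fun r i h => ?_, fun r i h => ?_⟩
  · linarith [hgrowth Z, frobSq_nonneg (Z - S)]
  · have hdist : frobSq (Z - S) = 0 := le_antisymm (by linarith [hgrowth Z, hZ S]) (frobSq_nonneg _)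
    exact sub_eq_zero.mp (frobSq_eq_zero_iff.mp hdist)
  · rw [hS, max_eq_right h, div_self hlam.ne', sub_self, zero_mul]
  · rw [hS, max_eq_left h.le]
end

section
/- If μ on ℝ^d is absolutely continuous with compact support and f is a differentiable Kantorovich potential for the inner-product cost c(x,y) = −⟨x,y⟩ between μ and ν, then T = −∇f pushes μ forward to ν and (id, T)_♯ μ is an optimal coupling; i.e., T is a Monge map for the inner-product cost. -/
open MeasureTheory BigOperators

noncomputable section

variable {d : ℕ}

/-- The `c`-transform of `f`, with the infimum over a (compact) set `K`
carrying the first measure. -/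
def ctransform (c : EuclideanSpace ℝ (Fin d) → EuclideanSpace ℝ (Fin d) → ℝ)
    (K : Set (EuclideanSpace ℝ (Fin d))) (f : EuclideanSpace ℝ (Fin d) → ℝ)
    (y : EuclideanSpace ℝ (Fin d)) : ℝ :=
  ⨅ x : K, (c x y - f x)

/-- `f` is a Kantorovich potential for cost `c` between `μ` and `ν`. -/
def IsKantorovichPotential
    (c : EuclideanSpace ℝ (Fin d) → EuclideanSpace ℝ (Fin d) → ℝ)
    (μ ν : Measure (EuclideanSpace ℝ (Fin d)))
    (K : Set (EuclideanSpace ℝ (Fin d)))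
    (f : EuclideanSpace ℝ (Fin d) → ℝ) : Prop :=
  Continuous f ∧
    ∀ g : EuclideanSpace ℝ (Fin d) → ℝ, Continuous g →
      (∫ z, g z ∂μ) + (∫ w, ctransform c K g w ∂ν)
        ≤ (∫ z, f z ∂μ) + (∫ w, ctransform c K f w ∂ν)

/-!
Write `fᶜ` for the `c`-transform of `f` on `K` and `fᶜᶜ` for the transform of `fᶜ` back on `K'`.
Then `f ≤ fᶜᶜ` on `K` and `fᶜ ≤ (fᶜᶜ)ᶜ` on `K'`, so maximality of `f` forces `fᶜᶜ = f` `μ`-a.e.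
At a Lebesgue density point `x` of `K` where this holds, every `y ∈ K'` attaining the infimum
that defines `fᶜᶜ x` makes `z ↦ f z + ⟪y, z⟫` maximal on `K` at `x`, hence `∇f x = -y`: that
infimum has the unique minimizer `T x = -∇f x`. Comparing `f` with the competitor obtained by
transforming `fᶜ + ε h` back on `K'`, and letting `ε → 0⁺` (Danskin's formula and dominated
convergence), gives `∫ h dν ≤ ∫ h ∘ T dμ` for every bounded continuous `h`, hence `T♯μ = ν`.
Optimality of `(id, T)♯μ` follows from `f x + fᶜ y ≤ c x y`, with equality on the graph of `T`.
-/

open Set Filter Topology Function Metric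
open scoped BoundedContinuousFunction

section FirstOrder

variable {F : Type*} [NormedAddCommGroup F] [NormedSpace ℝ F] [MeasurableSpace F] [BorelSpace F]
  [FiniteDimensional ℝ F] (μ : Measure F) [μ.IsAddHaarMeasure] {s : Set F} {x : F}

theorem mem_posTangentConeAt_of_tendsto_density_one
    (hs : Tendsto (fun r => μ (s ∩ closedBall x r) / μ (closedBall x r)) (𝓝[>] 0) (𝓝 1))
    (v : F) : v ∈ posTangentConeAt s x := by
  have hpoint : ∀ n : ℕ, ∃ r : ℝ, ∃ w : F,
      r ∈ Ioo 0 (1 / ((n : ℝ) + 1)) ∧ dist w v ≤ 1 / (n + 1) ∧ x + r • w ∈ s := by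
    intro n
    have hn : (0 : ℝ) < 1 / (n + 1) := by positivity
    obtain ⟨r, ⟨_, hzs, _, rfl, _, ⟨w, hw, rfl⟩, rfl⟩, hr⟩ :=
      ((Measure.eventually_nonempty_inter_smul_of_density_one μ s x hs _ measurableSet_closedBall
        (measure_closedBall_pos μ v hn).ne').and (Ioo_mem_nhdsGT hn)).exists
    exact ⟨r, w, hr, hw, hzs⟩
  choose r w hr hw hws using hpoint
  have hr0 : Tendsto r atTop (𝓝 0) :=
    squeeze_zero (fun n => (hr n).1.le) (fun n => (hr n).2.le)
      tendsto_one_div_add_atTop_nhds_zero_nat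
  have hwv : Tendsto w atTop (𝓝 v) :=
    tendsto_iff_dist_tendsto_zero.2
      (squeeze_zero (fun _ => dist_nonneg) hw tendsto_one_div_add_atTop_nhds_zero_nat)
  refine mem_tangentConeAt_of_seq atTop (fun n => (r n).toNNReal⁻¹) (fun n => r n • w n)
    (by simpa using hr0.smul hwv) (Eventually.of_forall hws) (hwv.congr fun n => ?_)
  rw [NNReal.smul_def, NNReal.coe_inv, Real.coe_toNNReal _ (hr n).1.le,
    inv_smul_smul₀ (hr n).1.ne']

theorem IsMaxOn.fderiv_eq_zero_of_tendsto_density_one {φ : F → ℝ} (hmax : IsMaxOn φ s x)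
    (hφ : DifferentiableAt ℝ φ x)
    (hs : Tendsto (fun r => μ (s ∩ closedBall x r) / μ (closedBall x r)) (𝓝[>] 0) (𝓝 1)) :
    fderiv ℝ φ x = 0 := by
  ext v
  exact hmax.localize.hasFDerivWithinAt_eq_zero hφ.hasFDerivAt.hasFDerivWithinAt
    (mem_posTangentConeAt_of_tendsto_density_one μ hs v)
    (mem_posTangentConeAt_of_tendsto_density_one μ hs (-v))

end FirstOrder

section StrictMin

variable {X β : Type*}

def IsStrictMinOn [Preorder β] (φ : X → β) (s : Set X) (a : X) : Prop :=
  a ∈ s ∧ ∀ y ∈ s, y ≠ a → φ a < φ y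

theorem IsStrictMinOn.isMinOn [Preorder β] {φ : X → β} {s : Set X} {a : X}
    (ha : IsStrictMinOn φ s a) : IsMinOn φ s a := fun y hy => by
  rcases eq_or_ne y a with rfl | hne
  · exact le_rfl
  · exact (ha.2 y hy hne).le

variable [TopologicalSpace X] {s : Set X} {φ h : X → ℝ} {a : X}

theorem IsStrictMinOn.exists_pos_forall_add_le (hs : IsCompact s) (hφ : ContinuousOn φ s)
    (ha : IsStrictMinOn φ s a) {U : Set X} (hU : IsOpen U) (haU : a ∈ U) :
    ∃ δ > 0, ∀ y ∈ s \ U, φ a + δ ≤ φ y := by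
  rcases (s \ U).eq_empty_or_nonempty with hempty | hne
  · exact ⟨1, one_pos, by simp [hempty]⟩
  obtain ⟨b, hb, hbmin⟩ := (hs.diff hU).exists_isMinOn hne (hφ.mono sdiff_subset)
  refine ⟨φ b - φ a, sub_pos.2 (ha.2 b hb.1 fun hba => hb.2 (hba ▸ haU)), fun y hy => ?_⟩
  simpa using hbmin hy

/-- Danskin's formula, for a one-sided perturbation at a strict minimizer. -/
theorem IsStrictMinOn.tendsto_sInf_sub_sInf_div (hs : IsCompact s) (hφ : ContinuousOn φ s)
    (hh : Continuous h) (ha : IsStrictMinOn φ s a) :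
    Tendsto (fun ε => (sInf (φ '' s) - sInf ((fun y => φ y - ε * h y) '' s)) / ε)
      (𝓝[>] 0) (𝓝 (h a)) := by
  have hinf : sInf (φ '' s) = φ a := by
    rw [sInf_image']
    exact ha.isMinOn.iInf_eq ha.1
  obtain ⟨M, hM⟩ := hs.exists_bound_of_continuousOn hh.continuousOn
  have hM0 : 0 ≤ M := (norm_nonneg _).trans (hM a ha.1)
  rw [hinf]
  refine tendsto_order.2 ⟨fun b hb => ?_, fun b hb => ?_⟩
  · filter_upwards [self_mem_nhdsWithin] with ε (hε : 0 < ε)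
    refine hb.trans_le ((le_div_iff₀ hε).2 ?_)
    have hbdd : BddBelow ((fun y => φ y - ε * h y) '' s) :=
      (hs.image_of_continuousOn (hφ.sub (continuousOn_const.mul hh.continuousOn))).bddBelow
    have := csInf_le hbdd (mem_image_of_mem _ ha.1)
    linarith
  · obtain ⟨b', hab', hb'b⟩ := exists_between hb
    obtain ⟨δ, hδ, hgap⟩ :=
      ha.exists_pos_forall_add_le hs hφ (isOpen_lt hh continuous_const) hab'
    filter_upwards [Ioo_mem_nhdsGT (show 0 < δ / (2 * M + 1) by positivity)] with ε ⟨hε, hεδ⟩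
    rw [lt_div_iff₀ (by positivity)] at hεδ
    refine lt_of_le_of_lt ((div_le_iff₀ hε).2 ?_) hb'b
    suffices φ a - b' * ε ≤ sInf ((fun y => φ y - ε * h y) '' s) by linarith
    refine le_csInf ⟨_, mem_image_of_mem _ ha.1⟩ (forall_mem_image.2 fun y hy => ?_)
    by_cases hyU : h y < b'
    · have hmin : φ a ≤ φ y := ha.isMinOn hy
      nlinarith
    -- away from `a` the gap `δ` beats the perturbation, as `ε * (2 * M + 1) < δ`
    · have hgapy := hgap y ⟨hy, hyU⟩
      have hha := (abs_le.1 (Real.norm_eq_abs _ ▸ hM a ha.1)).1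
      have hhy := (abs_le.1 (Real.norm_eq_abs _ ▸ hM y hy)).2
      nlinarith

end StrictMin

theorem Continuous.uncurry_flip {X Y Z : Type*} [TopologicalSpace X] [TopologicalSpace Y]
    [TopologicalSpace Z] {c : X → Y → Z} (hc : Continuous (uncurry c)) :
    Continuous (uncurry (flip c)) :=
  hc.comp continuous_swap

theorem Continuous.integrable_of_ae_mem_compact {X : Type*} [TopologicalSpace X]
    [MeasurableSpace X] [OpensMeasurableSpace X] {μ : Measure X} [IsFiniteMeasure μ]
    {K : Set X} (hK : IsCompact K) (hμK : ∀ᵐ x ∂μ, x ∈ K) {g : X → ℝ} (hg : Continuous g) :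
    Integrable g μ := by
  obtain ⟨M, hM⟩ := hK.exists_bound_of_continuousOn hg.continuousOn
  exact .of_bound hg.aestronglyMeasurable M (hμK.mono hM)

section CTransform

variable {c : EuclideanSpace ℝ (Fin d) → EuclideanSpace ℝ (Fin d) → ℝ}
  {K : Set (EuclideanSpace ℝ (Fin d))} {g : EuclideanSpace ℝ (Fin d) → ℝ}
  {x y : EuclideanSpace ℝ (Fin d)}

theorem ctransform_eq_sInf_image (c : EuclideanSpace ℝ (Fin d) → EuclideanSpace ℝ (Fin d) → ℝ)
    (K : Set (EuclideanSpace ℝ (Fin d))) (g : EuclideanSpace ℝ (Fin d) → ℝ)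
    (y : EuclideanSpace ℝ (Fin d)) :
    ctransform c K g y = sInf ((fun x => c x y - g x) '' K) := by
  rw [sInf_image']
  rfl

theorem ctransform_eq_of_isMinOn (hx : x ∈ K) (hmin : IsMinOn (fun z => c z y - g z) K x) :
    ctransform c K g y = c x y - g x :=
  hmin.iInf_eq hx

theorem le_ctransform {b : ℝ} (hKne : K.Nonempty) (h : ∀ x ∈ K, b ≤ c x y - g x) :
    b ≤ ctransform c K g y :=
  have := hKne.to_subtype
  le_ciInf fun x => h x x.2

variable (hc : Continuous (uncurry c)) (hK : IsCompact K) (hg : Continuous g)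
include hc hK hg

theorem continuous_ctransform : Continuous (ctransform c K g) := by
  simp_rw [funext (ctransform_eq_sInf_image c K g)]
  exact hK.continuous_sInf (hc.uncurry_flip.sub (hg.comp continuous_snd))

theorem ctransform_le (hx : x ∈ K) (y : EuclideanSpace ℝ (Fin d)) :
    ctransform c K g y ≤ c x y - g x := by
  rw [ctransform_eq_sInf_image]
  exact csInf_le (hK.image ((hc.uncurry_right y).sub hg)).bddBelow (mem_image_of_mem _ hx)

theorem exists_ctransform_eq (hKne : K.Nonempty) (y : EuclideanSpace ℝ (Fin d)) :
    ∃ x ∈ K, ctransform c K g y = c x y - g x := by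
  rw [ctransform_eq_sInf_image]
  obtain ⟨x, hx, hxeq⟩ := (hK.image ((hc.uncurry_right y).sub hg)).sInf_mem (hKne.image _)
  exact ⟨x, hx, hxeq.symm⟩

theorem abs_ctransform_sub_ctransform_le {g' : EuclideanSpace ℝ (Fin d) → ℝ}
    (hg' : Continuous g') (hKne : K.Nonempty) {M : ℝ} (hM : ∀ x ∈ K, |g x - g' x| ≤ M)
    (y : EuclideanSpace ℝ (Fin d)) : |ctransform c K g y - ctransform c K g' y| ≤ M := by
  refine abs_sub_le_iff.2 ⟨?_, ?_⟩
  · have := le_ctransform (c := c) (g := g') hKne fun x hx =>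
      show ctransform c K g y - M ≤ c x y - g' x by
        linarith [ctransform_le hc hK hg hx y, (abs_le.1 (hM x hx)).1]
    linarith
  · have := le_ctransform (c := c) (g := g) hKne fun x hx =>
      show ctransform c K g' y - M ≤ c x y - g x by
        linarith [ctransform_le hc hK hg' hx y, (abs_le.1 (hM x hx)).2]
    linarith

theorem le_ctransform_flip_ctransform {K' : Set (EuclideanSpace ℝ (Fin d))}
    (hK'ne : K'.Nonempty) (hx : x ∈ K) : g x ≤ ctransform (flip c) K' (ctransform c K g) x :=
  le_ctransform hK'ne fun y _ => by
    have := ctransform_le hc hK hg hx y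
    simp only [flip]
    linarith

theorem isMaxOn_sub_of_eq_sub_ctransform (hxy : g x = c x y - ctransform c K g y) :
    IsMaxOn (fun z => g z - c z y) K x := fun z hz => by
  have := ctransform_le hc hK hg hz y
  show g z - c z y ≤ g x - c x y
  linarith

theorem isStrictMinOn_of_forall_ctransform_eq {t : EuclideanSpace ℝ (Fin d)} (hKne : K.Nonempty)
    (h : ∀ x ∈ K, ctransform c K g y = c x y - g x → x = t) :
    IsStrictMinOn (fun x => c x y - g x) K t := by
  obtain ⟨x₀, hx₀, heq⟩ := exists_ctransform_eq hc hK hg hKne y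
  obtain rfl := h x₀ hx₀ heq
  refine ⟨hx₀, fun x hx hne => lt_of_le_of_ne ?_ fun hxeq => hne (h x hx (heq.trans hxeq))⟩
  show c x₀ y - g x₀ ≤ c x y - g x
  rw [← heq]
  exact ctransform_le hc hK hg hx y

theorem tendsto_ctransform_sub_ctransform_div {h : EuclideanSpace ℝ (Fin d) → ℝ}
    (hh : Continuous h) {t : EuclideanSpace ℝ (Fin d)}
    (ht : IsStrictMinOn (fun x => c x y - g x) K t) :
    Tendsto (fun ε => (ctransform c K g y - ctransform c K (fun x => g x + ε * h x) y) / ε)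
      (𝓝[>] 0) (𝓝 (h t)) := by
  simp only [ctransform_eq_sInf_image, sub_add_eq_sub_sub]
  exact ht.tendsto_sInf_sub_sInf_div hK ((hc.uncurry_right y).sub hg).continuousOn hh

end CTransform

section Coupling

variable {c : EuclideanSpace ℝ (Fin d) → EuclideanSpace ℝ (Fin d) → ℝ}
  {μ ν : Measure (EuclideanSpace ℝ (Fin d))} [IsFiniteMeasure μ] [IsFiniteMeasure ν]
  {K K' : Set (EuclideanSpace ℝ (Fin d))} {f : EuclideanSpace ℝ (Fin d) → ℝ}
  {T : EuclideanSpace ℝ (Fin d) → EuclideanSpace ℝ (Fin d)}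
  (hc : Continuous (uncurry c)) (hK : IsCompact K) (hK' : IsCompact K')
  (hμK : ∀ᵐ x ∂μ, x ∈ K) (hνK' : ∀ᵐ y ∂ν, y ∈ K')
include hc hK hK' hμK hνK'

theorem integral_cost_map_graph_le_of_ae_eq (hf : Continuous f) (hTm : AEMeasurable T μ)
    (hmap : μ.map T = ν) (hT : ∀ᵐ x ∂μ, c x (T x) = f x + ctransform c K f (T x))
    {π : Measure (EuclideanSpace ℝ (Fin d) × EuclideanSpace ℝ (Fin d))}
    (hπ₁ : π.map Prod.fst = μ) (hπ₂ : π.map Prod.snd = ν) :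
    ∫ p, c p.1 p.2 ∂(μ.map fun x => (x, T x)) ≤ ∫ p, c p.1 p.2 ∂π := by
  have hfc := continuous_ctransform hc hK hf
  have : IsFiniteMeasure (π.map Prod.fst) := hπ₁ ▸ inferInstance
  have : IsFiniteMeasure π := Measure.isFiniteMeasure_of_map measurable_fst.aemeasurable
  have hπK : ∀ᵐ p ∂π, p ∈ K ×ˢ K' :=
    (ae_of_ae_map measurable_fst.aemeasurable (hπ₁ ▸ hμK)).and
      (ae_of_ae_map measurable_snd.aemeasurable (hπ₂ ▸ hνK'))
  have hfcT : Integrable (fun x => ctransform c K f (T x)) μ :=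
    (integrable_map_measure hfc.aestronglyMeasurable hTm).1
      (hmap ▸ hfc.integrable_of_ae_mem_compact hK' hνK')
  have hfπ : Integrable (fun p => f p.1) π :=
    (hf.comp continuous_fst).integrable_of_ae_mem_compact (hK.prod hK') hπK
  have hfcπ : Integrable (fun p => ctransform c K f p.2) π :=
    (hfc.comp continuous_snd).integrable_of_ae_mem_compact (hK.prod hK') hπK
  calc ∫ p, c p.1 p.2 ∂(μ.map fun x => (x, T x))
      = ∫ x, c x (T x) ∂μ :=
        integral_map (aemeasurable_id.prodMk hTm) hc.aestronglyMeasurable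
    _ = ∫ x, (f x + ctransform c K f (T x)) ∂μ := integral_congr_ae hT
    _ = ∫ p, (f p.1 + ctransform c K f p.2) ∂π := by
        rw [integral_add (hf.integrable_of_ae_mem_compact hK hμK) hfcT, integral_add hfπ hfcπ,
          ← integral_map hTm hfc.aestronglyMeasurable, hmap,
          ← integral_map measurable_fst.aemeasurable hf.aestronglyMeasurable, hπ₁,
          ← integral_map measurable_snd.aemeasurable hfc.aestronglyMeasurable, hπ₂]
    _ ≤ ∫ p, c p.1 p.2 ∂π :=
        integral_mono_ae (hfπ.add hfcπ) (hc.integrable_of_ae_mem_compact (hK.prod hK') hπK)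
          (hπK.mono fun p hp => by linarith [ctransform_le hc hK hf hp.1 p.2])

variable (hf : IsKantorovichPotential c μ ν K f) (hKne : K.Nonempty) (hK'ne : K'.Nonempty)
include hf hKne hK'ne

theorem IsKantorovichPotential.ctransform_ctransform_ae_eq :
    ctransform (flip c) K' (ctransform c K f) =ᵐ[μ] f := by
  have hfc := continuous_ctransform hc hK hf.1
  have hft := continuous_ctransform hc.uncurry_flip hK' hfc
  have hle : f ≤ᵐ[μ] ctransform (flip c) K' (ctransform c K f) :=
    hμK.mono fun x hx => le_ctransform_flip_ctransform hc hK hf.1 hK'ne hx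
  have hdual : ∫ y, ctransform c K f y ∂ν
      ≤ ∫ y, ctransform c K (ctransform (flip c) K' (ctransform c K f)) y ∂ν :=
    integral_mono_ae (hfc.integrable_of_ae_mem_compact hK' hνK')
      ((continuous_ctransform hc hK hft).integrable_of_ae_mem_compact hK' hνK')
      (hνK'.mono fun y hy => le_ctransform_flip_ctransform hc.uncurry_flip hK' hfc hKne hy)
  have hJ := hf.2 _ hft
  have hfμ := hf.1.integrable_of_ae_mem_compact hK hμK
  have hftμ := hft.integrable_of_ae_mem_compact hK hμK
  exact ((integral_eq_iff_of_ae_le hfμ hftμ hle).1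
    (le_antisymm (integral_mono_ae hfμ hftμ hle) (by linarith))).symm

theorem IsKantorovichPotential.mul_integral_le_integral_sub {h : EuclideanSpace ℝ (Fin d) → ℝ}
    (hh : Continuous h) (ε : ℝ) :
    ε * ∫ y, h y ∂ν ≤ ∫ x, (ctransform (flip c) K' (ctransform c K f) x
      - ctransform (flip c) K' (fun y => ctransform c K f y + ε * h y) x) ∂μ := by
  have hfc := continuous_ctransform hc hK hf.1
  have hG : Continuous fun y => ctransform c K f y + ε * h y := hfc.add (continuous_const.mul hh)
  have hgε := continuous_ctransform hc.uncurry_flip hK' hG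
  have hJ := hf.2 _ hgε
  have hdual : ∫ y, (ctransform c K f y + ε * h y) ∂ν
      ≤ ∫ y, ctransform c K (ctransform (flip c) K' fun y => ctransform c K f y + ε * h y) y ∂ν :=
    integral_mono_ae (hG.integrable_of_ae_mem_compact hK' hνK')
      ((continuous_ctransform hc hK hgε).integrable_of_ae_mem_compact hK' hνK')
      (hνK'.mono fun y hy => le_ctransform_flip_ctransform hc.uncurry_flip hK' hG hKne hy)
  rw [integral_add (hfc.integrable_of_ae_mem_compact hK' hνK')
    ((hh.integrable_of_ae_mem_compact hK' hνK').const_mul ε), integral_const_mul] at hdual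
  rw [integral_sub
    ((continuous_ctransform hc.uncurry_flip hK' hfc).integrable_of_ae_mem_compact hK hμK)
    (hgε.integrable_of_ae_mem_compact hK hμK),
    integral_congr_ae (hf.ctransform_ctransform_ae_eq hc hK hK' hμK hνK' hKne hK'ne)]
  linarith

variable (hT : ∀ᵐ x ∂μ, IsStrictMinOn (fun y => c x y - ctransform c K f y) K' (T x))
include hT

theorem IsKantorovichPotential.integral_le_integral_comp (h : EuclideanSpace ℝ (Fin d) →ᵇ ℝ) :
    ∫ y, h y ∂ν ≤ ∫ x, h (T x) ∂μ := by
  have hfc := continuous_ctransform hc hK hf.1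
  have hG : ∀ ε : ℝ, Continuous fun y => ctransform c K f y + ε * h y := fun ε =>
    hfc.add (continuous_const.mul h.continuous)
  have hlim : Tendsto (fun ε => ∫ x, (ctransform (flip c) K' (ctransform c K f) x
      - ctransform (flip c) K' (fun y => ctransform c K f y + ε * h y) x) / ε ∂μ)
      (𝓝[>] 0) (𝓝 (∫ x, h (T x) ∂μ)) := by
    refine tendsto_integral_filter_of_dominated_convergence (fun _ => ‖h‖)
      (Eventually.of_forall fun ε => (((continuous_ctransform hc.uncurry_flip hK' hfc).sub
        (continuous_ctransform hc.uncurry_flip hK' (hG ε))).div_const ε).aestronglyMeasurable)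
      ?_ (integrable_const _) (hT.mono fun x hx =>
        tendsto_ctransform_sub_ctransform_div hc.uncurry_flip hK' hfc h.continuous hx)
    filter_upwards [self_mem_nhdsWithin] with ε (hε : 0 < ε)
    refine Eventually.of_forall fun x => ?_
    rw [Real.norm_eq_abs, abs_div, abs_of_pos hε, div_le_iff₀ hε, mul_comm]
    refine abs_ctransform_sub_ctransform_le hc.uncurry_flip hK' hfc (hG ε) hK'ne
      (fun y _ => ?_) x
    rw [sub_add_cancel_left, abs_neg, abs_mul, abs_of_pos hε, ← Real.norm_eq_abs]
    exact mul_le_mul_of_nonneg_left (h.norm_coe_le_norm y) hε.le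
  refine ge_of_tendsto hlim ?_
  filter_upwards [self_mem_nhdsWithin] with ε (hε : 0 < ε)
  rw [integral_div, le_div_iff₀ hε, mul_comm]
  exact hf.mul_integral_le_integral_sub hc hK hK' hμK hνK' hKne hK'ne h.continuous ε

theorem IsKantorovichPotential.map_eq (hTm : AEMeasurable T μ) : μ.map T = ν := by
  refine ext_of_forall_integral_eq_of_IsFiniteMeasure fun h => ?_
  rw [integral_map hTm h.continuous.aestronglyMeasurable]
  have hneg := hf.integral_le_integral_comp hc hK hK' hμK hνK' hKne hK'ne hT (-h)
  simp only [BoundedContinuousFunction.coe_neg, Pi.neg_apply, integral_neg] at hneg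
  exact le_antisymm (by linarith)
    (hf.integral_le_integral_comp hc hK hK' hμK hνK' hKne hK'ne hT h)

theorem IsKantorovichPotential.integral_cost_map_graph_le (hTm : AEMeasurable T μ)
    {π : Measure (EuclideanSpace ℝ (Fin d) × EuclideanSpace ℝ (Fin d))}
    (hπ₁ : π.map Prod.fst = μ) (hπ₂ : π.map Prod.snd = ν) :
    ∫ p, c p.1 p.2 ∂(μ.map fun x => (x, T x)) ≤ ∫ p, c p.1 p.2 ∂π := by
  refine integral_cost_map_graph_le_of_ae_eq hc hK hK' hμK hνK' hf.1 hTm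
    (hf.map_eq hc hK hK' hμK hνK' hKne hK'ne hT hTm) ?_ hπ₁ hπ₂
  filter_upwards [hT, hf.ctransform_ctransform_ae_eq hc hK hK' hμK hνK' hKne hK'ne]
    with x hx hft
  have := ctransform_eq_of_isMinOn (c := flip c) hx.1 hx.isMinOn
  simp only [flip] at this
  linarith

end Coupling

section InnerCost

variable {F : Type*} [NormedAddCommGroup F] [InnerProductSpace ℝ F] [MeasurableSpace F]
  [BorelSpace F]

theorem measurable_gradient [CompleteSpace F] (f : F → ℝ) : Measurable (gradient f) :=
  (InnerProductSpace.toDual ℝ F).symm.continuous.measurable.comp (measurable_fderiv ℝ f)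

theorem IsMaxOn.gradient_eq_neg_of_tendsto_density_one [FiniteDimensional ℝ F] (μ : Measure F)
    [μ.IsAddHaarMeasure] {f : F → ℝ} {s : Set F} {x y : F}
    (hmax : IsMaxOn (fun z => f z + inner ℝ y z) s x) (hf : DifferentiableAt ℝ f x)
    (hs : Tendsto (fun r => μ (s ∩ closedBall x r) / μ (closedBall x r)) (𝓝[>] 0) (𝓝 1)) :
    gradient f x = -y := by
  have hD : HasFDerivAt (fun z => f z + inner ℝ y z) (fderiv ℝ f x + innerSL ℝ y) x :=
    hf.hasFDerivAt.add (innerSL ℝ y).hasFDerivAt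
  have h0 := hmax.fderiv_eq_zero_of_tendsto_density_one μ hD.differentiableAt hs
  rw [hD.fderiv] at h0
  refine ext_inner_right ℝ fun v => ?_
  have hv := congrArg (fun L : F →L[ℝ] ℝ => L v) h0
  simp only [add_apply, innerSL_apply_apply, zero_apply] at hv
  rw [hf.hasGradientAt.fderiv_apply] at hv
  rw [inner_neg_left]
  linarith

end InnerCost

theorem IsKantorovichPotential.ae_isStrictMinOn_neg_gradient
    {μ ν : Measure (EuclideanSpace ℝ (Fin d))} [IsFiniteMeasure μ] [IsFiniteMeasure ν]
    {K K' : Set (EuclideanSpace ℝ (Fin d))} {f : EuclideanSpace ℝ (Fin d) → ℝ}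
    (hf : IsKantorovichPotential (fun x y => -inner ℝ x y) μ ν K f)
    (hK : IsCompact K) (hKne : K.Nonempty) (hK' : IsCompact K') (hK'ne : K'.Nonempty)
    (hμK : ∀ᵐ x ∂μ, x ∈ K) (hνK' : ∀ᵐ y ∂ν, y ∈ K') (hac : μ ≪ volume)
    (hdiff : Differentiable ℝ f) :
    ∀ᵐ x ∂μ, IsStrictMinOn (fun y => -inner ℝ x y - ctransform (fun x y => -inner ℝ x y) K f y)
      K' (-gradient f x) := by
  have hc : Continuous (uncurry fun x y : EuclideanSpace ℝ (Fin d) => -inner ℝ x y) :=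
    (continuous_fst.inner continuous_snd).neg
  have hdens : ∀ᵐ x ∂μ, Tendsto (fun r => volume (K ∩ closedBall x r) / volume (closedBall x r))
      (𝓝[>] 0) (𝓝 1) := by
    have hacK : μ ≪ volume.restrict K := by
      rw [← Measure.restrict_eq_self_of_ae_mem hμK]
      exact hac.restrict K
    exact hacK.ae_le (Besicovitch.ae_tendsto_measure_inter_div volume K)
  filter_upwards [hdens, hf.ctransform_ctransform_ae_eq hc hK hK' hμK hνK' hKne hK'ne]
    with x hxK hft
  refine isStrictMinOn_of_forall_ctransform_eq hc.uncurry_flip hK'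
    (continuous_ctransform hc hK hf.1) hK'ne fun y _ hy => ?_
  have hmax := isMaxOn_sub_of_eq_sub_ctransform hc hK hf.1 (hft.symm.trans hy)
  simp only [sub_neg_eq_add, real_inner_comm] at hmax
  rw [hmax.gradient_eq_neg_of_tendsto_density_one volume (hdiff x) hxK, neg_neg]

/-- if `μ` is absolutely continuous with compact support and `f`
is a differentiable Kantorovich potential for the cost `c(x,y) = −⟨x,y⟩`
between `μ` and `ν`, then `T = −∇f` pushes `μ` forward to `ν` and
`(id, T)_♯ μ` is an optimal coupling for this cost, i.e. `T` is a Monge map. -/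
theorem monge_map_neg_grad_potential_inner_cost
    (μ ν : Measure (EuclideanSpace ℝ (Fin d)))
    [IsProbabilityMeasure μ] [IsProbabilityMeasure ν]
    (K K' : Set (EuclideanSpace ℝ (Fin d)))
    (hK : IsCompact K) (hKne : K.Nonempty) (hμK : μ K = 1)
    (hK' : IsCompact K') (hνK' : ν K' = 1)
    (hac : μ ≪ volume)
    (f : EuclideanSpace ℝ (Fin d) → ℝ)
    (hdiff : Differentiable ℝ f)
    (hf : IsKantorovichPotential (fun x y => -(inner ℝ x y : ℝ)) μ ν K f) :
    Measure.map (fun x => -gradient f x) μ = ν ∧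
      ∀ π : Measure (EuclideanSpace ℝ (Fin d) × EuclideanSpace ℝ (Fin d)),
        π.map Prod.fst = μ → π.map Prod.snd = ν →
        (∫ p, -(inner ℝ p.1 p.2 : ℝ)
            ∂(μ.map (fun x => (x, -gradient f x))))
          ≤ ∫ p, -(inner ℝ p.1 p.2 : ℝ) ∂π := by
  have hc : Continuous (uncurry fun x y : EuclideanSpace ℝ (Fin d) => -inner ℝ x y) :=
    (continuous_fst.inner continuous_snd).neg
  have hμK_ae : ∀ᵐ x ∂μ, x ∈ K :=
    (ae_iff_measure_eq hK.measurableSet.nullMeasurableSet).2 (hμK.trans measure_univ.symm)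
  have hνK'_ae : ∀ᵐ y ∂ν, y ∈ K' :=
    (ae_iff_measure_eq hK'.measurableSet.nullMeasurableSet).2 (hνK'.trans measure_univ.symm)
  have hK'ne : K'.Nonempty := hνK'_ae.exists
  have hTm : AEMeasurable (fun x => -gradient f x) μ := (measurable_gradient f).neg.aemeasurable
  have hT := hf.ae_isStrictMinOn_neg_gradient hK hKne hK' hK'ne hμK_ae hνK'_ae hac hdiff
  exact ⟨hf.map_eq hc hK hK' hμK_ae hνK'_ae hKne hK'ne hT hTm, fun π hπ₁ hπ₂ =>
    hf.integral_cost_map_graph_le hc hK hK' hμK_ae hνK'_ae hKne hK'ne hT hTm hπ₁ hπ₂⟩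

end
end
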